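/- arXiv:2303.07658 — 2 statements merged into one kernel-verified Lean document; each statement's English description precedes it below -/
import Mathlib

section
/- Let σ be an even signed permutation of degree n with a ∈ [n] and σ(a) > 0, and let σ' = (1,-1)(σ(a),-σ(a))σ. Then L(σ') = L(σ) + 2|{i ∈ [a-1] : |σ(i)| < σ(a), i ≢ a (mod 2)}|, where L is the type-D odd length, L(σ) = oinv(σ) + onsp(σ) with oinv(σ) = |{(i,j) : 1 ≤ i < j ≤ n, σ(i) > σ(j), i ≢ j (mod 2)}| and onsp(σ) = |{(i,j) : 1 ≤ i < j ≤ n, σ(i) + σ(j) < 0, i ≢ j (mod 2)}|. -/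
open Polynomial Finset

namespace OddLength

/-- A signed permutation of degree `n`, encoded as an underlying permutation of
`Fin n` together with a sign vector. -/
abbrev SP (n : ℕ) := Equiv.Perm (Fin n) × (Fin n → Bool)

/-- The one-line value `σ(i)` of a signed permutation, for `i ∈ [1,n]` (and `0` elsewhere). -/
def sval {n : ℕ} (σ : SP n) (i : ℕ) : ℤ :=
  if h : 1 ≤ i ∧ i ≤ n then
    (if σ.2 ⟨i - 1, by omega⟩ then (-1 : ℤ) else 1) *
      (((σ.1 ⟨i - 1, by omega⟩ : Fin n) : ℕ) + 1 : ℤ)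
  else 0

/-- A signed permutation is *even* (lies in the Weyl group `D_n`) if it has an even
number of negative entries in its one-line notation. -/
def IsEvenSP {n : ℕ} (σ : SP n) : Prop :=
  Even ((Finset.univ.filter (fun i => σ.2 i = true)).card)

instance {n : ℕ} (σ : SP n) : Decidable (IsEvenSP σ) := by
  unfold IsEvenSP; infer_instance

/-- Pairs `1 ≤ i < j ≤ n` of positions. -/
def pairs (n : ℕ) : Finset (ℕ × ℕ) :=
  (Finset.Icc 1 n ×ˢ Finset.Icc 1 n).filter (fun p => p.1 < p.2)

/-- Number of inversions. -/
def invSP {n : ℕ} (σ : SP n) : ℕ :=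
  ((pairs n).filter (fun p => sval σ p.2 < sval σ p.1)).card

/-- Number of negative sum pairs. -/
def nspSP {n : ℕ} (σ : SP n) : ℕ :=
  ((pairs n).filter (fun p => sval σ p.1 + sval σ p.2 < 0)).card

/-- Number of odd inversions (positions of different parity). -/
def oinvSP {n : ℕ} (σ : SP n) : ℕ :=
  ((pairs n).filter (fun p => sval σ p.2 < sval σ p.1 ∧ p.1 % 2 ≠ p.2 % 2)).card

/-- Number of odd negative sum pairs (positions of different parity). -/
def onspSP {n : ℕ} (σ : SP n) : ℕ :=
  ((pairs n).filter (fun p => sval σ p.1 + sval σ p.2 < 0 ∧ p.1 % 2 ≠ p.2 % 2)).card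

/-- The type-`D` Coxeter length `ℓ(σ) = inv(σ) + nsp(σ)`. -/
def ellD {n : ℕ} (σ : SP n) : ℕ := invSP σ + nspSP σ

/-- The type-`D` odd length `L(σ) = oinv(σ) + onsp(σ)`. -/
def LD {n : ℕ} (σ : SP n) : ℕ := oinvSP σ + onspSP σ

/-- The descent value at position `i`, with the type-`D` convention `σ(0) := -σ(2)`. -/
def dval {n : ℕ} (σ : SP n) (i : ℕ) : ℤ := if i = 0 then -sval σ 2 else sval σ i

/-- Membership in the parabolic quotient `D_n^I`: `σ(i) < σ(i+1)` for all `i ∈ I`,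
with the convention `σ(0) = -σ(2)`. -/
def InQuot {n : ℕ} (σ : SP n) (I : Finset ℕ) : Prop :=
  ∀ i ∈ I, dval σ i < dval σ (i + 1)

instance {n : ℕ} (σ : SP n) (I : Finset ℕ) : Decidable (InQuot σ I) := by
  unfold InQuot; infer_instance

/-- `σ` is ascending: `σ(1) < σ(2) < ⋯ < σ(n)`. -/
def Ascending {n : ℕ} (σ : SP n) : Prop :=
  ∀ i, 1 ≤ i → i < n → sval σ i < sval σ (i + 1)

/-- `σ` is a chessboard element: `σ(i) ≢ σ(i+1) (mod 2)` for all `i ∈ [n-1]`. -/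
def Chessboard {n : ℕ} (σ : SP n) : Prop :=
  ∀ i ∈ Finset.Icc 1 (n - 1), sval σ i % 2 ≠ sval σ (i + 1) % 2

instance {n : ℕ} (σ : SP n) : Decidable (Chessboard σ) := by
  unfold Chessboard; infer_instance

/-- The sign-twisted generating function of the odd length over `D_n^I`. -/
noncomputable def genD (n : ℕ) (I : Finset ℕ) : Polynomial ℤ :=
  ∑ σ ∈ Finset.univ.filter (fun σ : SP n => IsEvenSP σ ∧ InQuot σ I),
    (-1 : Polynomial ℤ) ^ ellD σ * X ^ LD σ


/-- The effect on a value of composing with the cycles `(1,-1)(c,-c)`. -/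
def flipVal (c x : ℤ) : ℤ := Equiv.swap c (-c) (Equiv.swap (1 : ℤ) (-1) x)

lemma flip_one (x : ℤ) : flipVal 1 x = x := by
  simp only [flipVal, Equiv.swap_apply_def]
  split_ifs <;> first | omega | contradiction

lemma flip_gt {c : ℤ} (hc : 1 < c) (x : ℤ) :
    flipVal c x = if x = c then -c else if x = -c then c else
      if x = 1 then -1 else if x = -1 then 1 else x := by
  simp only [flipVal, Equiv.swap_apply_def]
  split_ifs <;> omega

lemma flip_cases {c : ℤ} (hc : 1 < c) (x : ℤ) :
    (x = c ∧ flipVal c x = -c) ∨ (x = -c ∧ flipVal c x = c) ∨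
    (x = 1 ∧ flipVal c x = -1) ∨ (x = -1 ∧ flipVal c x = 1) ∨
    (x ≠ c ∧ x ≠ -c ∧ x ≠ 1 ∧ x ≠ -1 ∧ flipVal c x = x) := by
  rw [flip_gt hc]
  split_ifs <;> omega

lemma sval_abs {n : ℕ} (σ : SP n) {i : ℕ} (h1 : 1 ≤ i) (h2 : i ≤ n) :
    |sval σ i| = ((σ.1 ⟨i - 1, by omega⟩ : Fin n) : ℕ) + 1 := by
  rw [sval, dif_pos ⟨h1, h2⟩]
  split_ifs
  · rw [neg_one_mul, abs_neg, abs_of_nonneg (by positivity)]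
  · rw [one_mul, abs_of_nonneg (by positivity)]

lemma sval_abs_pos {n : ℕ} (σ : SP n) {i : ℕ} (h1 : 1 ≤ i) (h2 : i ≤ n) :
    1 ≤ |sval σ i| := by
  rw [sval_abs σ h1 h2]; omega

lemma sval_abs_inj {n : ℕ} (σ : SP n) {i j : ℕ} (hi1 : 1 ≤ i) (hi2 : i ≤ n)
    (hj1 : 1 ≤ j) (hj2 : j ≤ n) (h : |sval σ i| = |sval σ j|) : i = j := by
  rw [sval_abs σ hi1 hi2, sval_abs σ hj1 hj2] at h
  have h2 : ((σ.1 ⟨i - 1, by omega⟩ : Fin n) : ℕ) = ((σ.1 ⟨j - 1, by omega⟩ : Fin n) : ℕ) := by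
    omega
  have h3 : (⟨i - 1, by omega⟩ : Fin n) = ⟨j - 1, by omega⟩ :=
    σ.1.injective (Fin.val_injective h2)
  have h4 : i - 1 = j - 1 := congrArg Fin.val h3
  omega

/-- The contribution of a pair of positions to the odd length. -/
def Fp {n : ℕ} (σ : SP n) (p : ℕ × ℕ) : ℕ :=
  (if sval σ p.2 < sval σ p.1 ∧ p.1 % 2 ≠ p.2 % 2 then 1 else 0) +
  (if sval σ p.1 + sval σ p.2 < 0 ∧ p.1 % 2 ≠ p.2 % 2 then 1 else 0)

lemma Tred {x y ax ay : ℤ} {P : Prop} [Decidable P] (hxe : ax = x ∨ ax = -x)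
    (hye : ay = y ∨ ay = -y) (hx1 : 1 ≤ ax) (hy1 : 1 ≤ ay) (hxy : ax ≠ ay) :
    (if y < x ∧ P then (1:ℕ) else 0) + (if x + y < 0 ∧ P then 1 else 0) =
    (if ay < ax ∧ P then 1 else 0) + 2 * (if y < -ax ∧ P then 1 else 0) := by
  by_cases hP : P
  · simp only [hP, and_true]
    split_ifs <;> omega
  · simp only [hP, and_false, if_false]

lemma LD_eq_sum {n : ℕ} (σ : SP n) : LD σ = ∑ p ∈ pairs n, Fp σ p := by
  unfold LD oinvSP onspSP
  rw [Finset.card_filter, Finset.card_filter, ← Finset.sum_add_distrib]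
  rfl

set_option maxHeartbeats 1000000 in
/-- Lemma 2.3, odd-length part: if `σ' = (1,-1)(σ(a),-σ(a))σ` with `σ(a) > 0`, then
`L(σ') = L(σ) + 2|{i ∈ [a-1] : |σ(i)| < σ(a), i ≢ a (mod 2)}|`. -/
theorem stmt5 {n : ℕ} (σ σ' : SP n) (a : ℕ) (ha : a ∈ Finset.Icc 1 n)
    (heven : IsEvenSP σ) (heven' : IsEvenSP σ') (hpos : 0 < sval σ a)
    (hσ' : ∀ i ∈ Finset.Icc 1 n, sval σ' i = flipVal (sval σ a) (sval σ i)) :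
    LD σ' = LD σ +
      2 * ((Finset.Icc 1 (a - 1)).filter
        (fun i => |sval σ i| < sval σ a ∧ i % 2 ≠ a % 2)).card := by
  obtain ⟨ha1, ha2⟩ := Finset.mem_Icc.mp ha
  have hca : |sval σ a| = sval σ a := abs_of_pos hpos
  have hc1 : 1 ≤ sval σ a := by have := sval_abs_pos σ ha1 ha2; omega
  have key : ∀ p ∈ pairs n, Fp σ' p = Fp σ p +
      (if p.2 = a ∧ |sval σ p.1| < sval σ a ∧ p.1 % 2 ≠ p.2 % 2 then 2 else 0) := by
    rintro ⟨i, j⟩ hp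
    simp only [pairs, Finset.mem_filter, Finset.mem_product, Finset.mem_Icc] at hp
    obtain ⟨⟨⟨hi1, hi2⟩, hj1, hj2⟩, hij⟩ := hp
    simp only [Fp]
    have hx' := hσ' i (Finset.mem_Icc.mpr ⟨hi1, hi2⟩)
    have hy' := hσ' j (Finset.mem_Icc.mpr ⟨hj1, hj2⟩)
    have hxabs : 1 ≤ |sval σ i| := sval_abs_pos σ hi1 hi2
    have hyabs : 1 ≤ |sval σ j| := sval_abs_pos σ hj1 hj2
    have hxy : |sval σ i| ≠ |sval σ j| := fun h => by
      have := sval_abs_inj σ hi1 hi2 hj1 hj2 h; omega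
    rcases eq_or_lt_of_le hc1 with hc | hc
    · -- c = 1
      rw [← hc, flip_one] at hx' hy'
      rw [hx', hy']
      rcases abs_choice (sval σ i) with hxe | hxe <;> split_ifs <;> omega
    · -- c > 1
      have hX := flip_cases hc (sval σ i)
      have hY := flip_cases hc (sval σ j)
      rw [← hx'] at hX
      rw [← hy'] at hY
      have hxe := abs_choice (sval σ i)
      have hye := abs_choice (sval σ j)
      have hxe' : |sval σ i| = sval σ' i ∨ |sval σ i| = -sval σ' i := by omega
      have hye' : |sval σ j| = sval σ' j ∨ |sval σ j| = -sval σ' j := by omega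
      rw [Tred hxe' hye' hxabs hyabs hxy, Tred hxe hye hxabs hyabs hxy]
      rcases eq_or_ne j a with rfl | hja
      · -- j = a
        have hxne : |sval σ i| ≠ sval σ j := fun h => by
          have : i = j := sval_abs_inj σ hi1 hi2 hj1 hj2 (by rw [h, hca])
          omega
        have hYc : sval σ' j = -(sval σ j) := by omega
        split_ifs <;> omega
      · -- j ≠ a
        have hyne : |sval σ j| ≠ sval σ a := fun h => by
          exact hja (sval_abs_inj σ hj1 hj2 ha1 ha2 (by rw [h, hca]))
        have hYeq : |sval σ j| < |sval σ i| ∨ sval σ' j = sval σ j := by omega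
        split_ifs <;> omega
  rw [LD_eq_sum σ', LD_eq_sum σ, Finset.sum_congr rfl key, Finset.sum_add_distrib]
  congr 1
  have h2 : (∑ p ∈ pairs n,
      if p.2 = a ∧ |sval σ p.1| < sval σ a ∧ p.1 % 2 ≠ p.2 % 2 then 2 else 0) =
      2 * ((pairs n).filter
        (fun p => p.2 = a ∧ |sval σ p.1| < sval σ a ∧ p.1 % 2 ≠ p.2 % 2)).card := by
    rw [Finset.card_filter, Finset.mul_sum]
    exact Finset.sum_congr rfl (fun p _ => by split_ifs <;> rfl)
  rw [h2]
  congr 1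
  refine Finset.card_bij' (fun p _ => p.1) (fun i _ => (i, a)) ?_ ?_ ?_ ?_
  · rintro ⟨i, j⟩ hp
    simp only [pairs, Finset.mem_filter, Finset.mem_product, Finset.mem_Icc] at hp ⊢
    obtain ⟨⟨⟨⟨hi1, hi2⟩, -⟩, hij⟩, rfl, h3, h4⟩ := hp
    exact ⟨⟨hi1, by omega⟩, h3, h4⟩
  · intro i hi
    simp only [Finset.mem_filter, Finset.mem_Icc] at hi
    obtain ⟨⟨hi1, hi2⟩, h3, h4⟩ := hi
    simp only [pairs, Finset.mem_filter, Finset.mem_product, Finset.mem_Icc]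
    exact ⟨⟨⟨⟨hi1, by omega⟩, ha1, ha2⟩, by omega⟩, by simp, h3, h4⟩
  · rintro ⟨i, j⟩ hp
    simp only [pairs, Finset.mem_filter, Finset.mem_product, Finset.mem_Icc] at hp
    obtain ⟨-, rfl, -⟩ := hp
    rfl
  · intro i _
    rfl

end OddLength
end

section
/- If σ is a chessboard element of D_n (an even signed permutation with σ(i) ≢ σ(i+1) (mod 2) for all i ∈ [n-1]) and σ = σ^{[n-1]} σ_{[n-1]} is the parabolic factorization with σ^{[n-1]} ascending (σ^{[n-1]}(1) < ⋯ < σ^{[n-1]}(n)) and σ_{[n-1]} an ordinary permutation of [n], then L(σ) = L(σ^{[n-1]}) + L(σ_{[n-1]}), where L is the type-D odd length on the first two and L restricted to S_n equals oinv on the last. -/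
open Polynomial Finset

namespace OddLength

/-! ### Auxiliary lemmas -/

lemma sval_natAbs_mem {n : ℕ} (σ : SP n) {i : ℕ} (hi : i ∈ Finset.Icc 1 n) :
    (sval σ i).natAbs ∈ Finset.Icc 1 n := by
  simp only [mem_Icc] at hi ⊢
  unfold sval
  rw [dif_pos hi]
  have h2 : ((σ.1 ⟨i - 1, by omega⟩ : Fin n) : ℕ) < n := (σ.1 _).isLt
  split <;> simp <;> omega

lemma sval_natAbs_inj {n : ℕ} (σ : SP n) {i j : ℕ} (hi : i ∈ Finset.Icc 1 n)
    (hj : j ∈ Finset.Icc 1 n)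
    (h : (sval σ i).natAbs = (sval σ j).natAbs) : i = j := by
  simp only [mem_Icc] at hi hj
  unfold sval at h
  rw [dif_pos hi, dif_pos hj] at h
  have : ((σ.1 ⟨i - 1, by omega⟩ : Fin n) : ℕ) = ((σ.1 ⟨j - 1, by omega⟩ : Fin n) : ℕ) := by
    split at h <;> split at h <;> simp at h <;> omega
  have h2 : (⟨i - 1, by omega⟩ : Fin n) = ⟨j - 1, by omega⟩ :=
    σ.1.injective (Fin.val_injective this)
  have := Fin.mk.injEq (i-1) _ (j-1) _ ▸ h2
  omega

lemma sval_image {n : ℕ} (σ : SP n) :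
    (Finset.Icc 1 n).image (fun i => (sval σ i).natAbs) = Finset.Icc 1 n := by
  apply eq_of_subset_of_card_le
  · intro m hm
    obtain ⟨i, hi, rfl⟩ := mem_image.1 hm
    exact sval_natAbs_mem σ hi
  · rw [card_image_of_injOn (fun i hi j hj h => sval_natAbs_inj σ hi hj h)]

lemma countB (m : ℕ) :
    ((Finset.Icc 1 (m-1)).filter (fun b => ¬ b % 2 = m % 2)).card = m / 2 := by
  induction m with
  | zero => simp
  | succ m ih =>
    rcases Nat.eq_zero_or_pos m with rfl | hm
    · simp
    · have h1 : Finset.Icc 1 ((m+1)-1) = insert m (Finset.Icc 1 (m-1)) := by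
        rw [show (m+1)-1 = m from rfl]
        ext x; simp [mem_Icc, mem_insert]; omega
      rw [h1, filter_insert]
      have hpar : ¬ m % 2 = (m+1) % 2 := by omega
      rw [if_pos hpar, card_insert_of_notMem
        (by intro h; rw [mem_filter, mem_Icc] at h; omega)]
      have h0 := card_filter_add_card_filter_not (s := Finset.Icc 1 (m-1))
        (p := fun b => ¬ b % 2 = m % 2)
      simp only [not_not] at h0
      have hc : (Finset.Icc 1 (m-1)).card = m - 1 := by simp
      have h3 : (Finset.Icc 1 (m-1)).filter (fun b => b % 2 = m % 2)
          = (Finset.Icc 1 (m-1)).filter (fun b => ¬ b % 2 = (m+1) % 2) := by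
        apply filter_congr; intro x _; constructor <;> intro <;> omega
      rw [h3, hc] at h0
      omega

lemma countB2 (i m : ℕ) :
    ((Finset.Icc (i+1) (i+m-1)).filter (fun j => ¬ j % 2 = i % 2)).card = m / 2 := by
  induction m with
  | zero =>
    rw [filter_eq_empty_iff.2 (by intro x hx; rw [mem_Icc] at hx; omega)]; simp
  | succ m ih =>
    rcases Nat.eq_zero_or_pos m with rfl | hm
    · rw [filter_eq_empty_iff.2 (by intro x hx; rw [mem_Icc] at hx; omega)]; simp
    · have h1 : Finset.Icc (i+1) (i+(m+1)-1) = insert (i+m) (Finset.Icc (i+1) (i+m-1)) := by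
        ext x; simp [mem_Icc, mem_insert]; omega
      rw [h1, filter_insert]
      by_cases hpar : ¬ (i+m) % 2 = i % 2
      · rw [if_pos hpar, card_insert_of_notMem
          (by intro h; rw [mem_filter, mem_Icc] at h; omega), ih]
        omega
      · rw [if_neg hpar, ih]
        omega

lemma mem_pairs {n : ℕ} {p : ℕ × ℕ} :
    p ∈ pairs n ↔ p.1 ∈ Finset.Icc 1 n ∧ p.2 ∈ Finset.Icc 1 n ∧ p.1 < p.2 := by
  unfold pairs; simp [mem_filter, mem_product]; tauto

lemma pairsCard (n : ℕ) (R : ℕ → ℕ → Prop) [∀ i j, Decidable (R i j)] :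
    ((pairs n).filter (fun p => R p.1 p.2)).card
      = ∑ i ∈ Finset.Icc 1 n, ((Finset.Icc 1 n).filter (fun j => i < j ∧ R i j)).card := by
  rw [card_eq_sum_card_fiberwise (f := Prod.fst) (t := Finset.Icc 1 n)
    (fun p hp => (mem_pairs.1 (mem_filter.1 hp).1).1)]
  apply sum_congr rfl; intro i hi
  apply card_bij (fun p _ => p.2)
  · intro p hp
    simp only [mem_filter] at hp ⊢
    obtain ⟨⟨hp1, hp2⟩, rfl⟩ := hp
    exact ⟨(mem_pairs.1 hp1).2.1, (mem_pairs.1 hp1).2.2, hp2⟩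
  · intro p hp q hq h
    simp only [mem_filter] at hp hq
    exact Prod.ext (hp.2.trans hq.2.symm) h
  · intro j hj
    simp only [mem_filter] at hj
    exact ⟨(i, j), mem_filter.2 ⟨mem_filter.2 ⟨mem_pairs.2 ⟨hi, hj.1, hj.2.1⟩, hj.2.2⟩, rfl⟩, rfl⟩

lemma prodCard (n : ℕ) (R : ℕ → ℕ → Prop) [∀ i j, Decidable (R i j)] :
    (((Finset.Icc 1 n) ×ˢ (Finset.Icc 1 n)).filter (fun p => R p.1 p.2)).card
      = ∑ i ∈ Finset.Icc 1 n, ((Finset.Icc 1 n).filter (fun j => R i j)).card := by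
  rw [card_eq_sum_card_fiberwise (f := Prod.fst) (t := Finset.Icc 1 n)
    (fun p hp => (mem_product.1 (mem_filter.1 hp).1).1)]
  apply sum_congr rfl; intro i hi
  apply card_bij (fun p _ => p.2)
  · intro p hp
    simp only [mem_filter] at hp ⊢
    obtain ⟨⟨hp1, hp2⟩, rfl⟩ := hp
    exact ⟨(mem_product.1 hp1).2, hp2⟩
  · intro p hp q hq h
    simp only [mem_filter] at hp hq
    exact Prod.ext (hp.2.trans hq.2.symm) h
  · intro j hj
    simp only [mem_filter] at hj
    exact ⟨(i, j), mem_filter.2 ⟨mem_filter.2 ⟨mem_product.2 ⟨hi, hj.1⟩, hj.2⟩, rfl⟩, rfl⟩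

lemma swapCard {n : ℕ} (f : ℕ → ℤ)
    (hinj : ∀ i ∈ Finset.Icc 1 n, ∀ j ∈ Finset.Icc 1 n,
      (f i).natAbs = (f j).natAbs → i = j)
    (Q : ℕ → ℕ → Prop) [∀ i j, Decidable (Q i j)] (hsym : ∀ i j, Q i j → Q j i) :
    ((pairs n).filter (fun p => Q p.1 p.2)).card =
      (((Finset.Icc 1 n) ×ˢ (Finset.Icc 1 n)).filter
        (fun p => Q p.1 p.2 ∧ (f p.2).natAbs < (f p.1).natAbs)).card := by
  refine card_bij' (fun p _ => if (f p.2).natAbs < (f p.1).natAbs then p else p.swap)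
    (fun p _ => if p.1 < p.2 then p else p.swap) ?_ ?_ ?_ ?_
  · intro p hp
    rw [mem_filter] at hp
    obtain ⟨hp1, hQ⟩ := hp
    obtain ⟨h1, h2, hlt⟩ := mem_pairs.1 hp1
    have hne : ¬ (f p.1).natAbs = (f p.2).natAbs := fun h => by
      have := hinj _ h1 _ h2 h; omega
    rw [mem_filter, mem_product]
    beta_reduce
    split
    · exact ⟨⟨h1, h2⟩, hQ, by assumption⟩
    · exact ⟨⟨h2, h1⟩, hsym _ _ hQ, by simp only [Prod.fst_swap, Prod.snd_swap]; omega⟩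
  · intro p hp
    rw [mem_filter, mem_product] at hp
    obtain ⟨⟨h1, h2⟩, hQ, habs⟩ := hp
    have hne : p.1 ≠ p.2 := fun h => by rw [h] at habs; omega
    rw [mem_filter]
    beta_reduce
    split
    · exact ⟨mem_pairs.2 ⟨h1, h2, by assumption⟩, hQ⟩
    · exact ⟨mem_pairs.2 ⟨h2, h1, by simp only [Prod.fst_swap, Prod.snd_swap]; omega⟩, hsym _ _ hQ⟩
  · intro p hp
    rw [mem_filter] at hp
    obtain ⟨hp1, hQ⟩ := hp
    obtain ⟨h1, h2, hlt⟩ := mem_pairs.1 hp1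
    beta_reduce
    by_cases hc : (f p.2).natAbs < (f p.1).natAbs
    · rw [if_pos hc, if_pos hlt]
    · rw [if_neg hc, Prod.fst_swap, Prod.snd_swap, if_neg (by omega), Prod.swap_swap]
  · intro p hp
    rw [mem_filter, mem_product] at hp
    obtain ⟨⟨h1, h2⟩, hQ, habs⟩ := hp
    beta_reduce
    by_cases hc : p.1 < p.2
    · rw [if_pos hc, if_pos habs]
    · rw [if_neg hc, Prod.fst_swap, Prod.snd_swap, if_neg (by omega), Prod.swap_swap]

lemma asc_lt {n : ℕ} (τ : SP n) (h : Ascending τ) :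
    ∀ s t : ℕ, 1 ≤ s → s < t → t ≤ n → sval τ s < sval τ t := by
  intro s t hs hst htn
  induction t with
  | zero => omega
  | succ t ih =>
    rcases Nat.lt_or_ge s t with h1 | h1
    · exact lt_trans (ih h1 (by omega)) (h t (by omega) (by omega))
    · have : s = t := by omega
      subst this
      exact h s hs (by omega)

/-- Count of odd negative pairs for an ascending signed permutation. -/
lemma onsp_asc {n : ℕ} (τ : SP n) (hτasc : Ascending τ) :
    onspSP τ = ∑ s ∈ (Finset.Icc 1 n).filter (fun s => sval τ s < 0),
      (sval τ s).natAbs / 2 := by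
  have key : onspSP τ = ∑ i ∈ Finset.Icc 1 n, ((Finset.Icc 1 n).filter
      (fun j => i < j ∧ (sval τ i + sval τ j < 0 ∧ ¬ i % 2 = j % 2))).card := by
    have h := pairsCard n (fun i j => sval τ i + sval τ j < 0 ∧ ¬ i % 2 = j % 2)
    unfold onspSP
    convert h using 2
  rw [key, sum_filter]
  apply sum_congr rfl
  intro i hi
  rcases lt_or_ge (sval τ i) 0 with hneg | hpos
  swap
  · rw [if_neg (by omega)]
    rw [card_eq_zero, filter_eq_empty_iff]
    intro j hj
    rw [mem_Icc] at hi hj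
    intro hcon
    obtain ⟨hij, hsum, _⟩ := hcon
    have := asc_lt τ hτasc i j (by omega) hij (by omega)
    omega
  · rw [if_pos hneg]
    set m := (sval τ i).natAbs with hm
    have hmIcc := sval_natAbs_mem τ hi
    rw [← hm, mem_Icc] at hmIcc
    rw [mem_Icc] at hi
    -- the set of positions with smaller absolute value
    set T := (Finset.Icc 1 n).filter (fun j => (sval τ j).natAbs < m) with hT
    have hTcard : T.card = m - 1 := by
      have : ((Finset.Icc 1 (m-1))).card = m - 1 := by simp
      rw [← this]
      apply card_bij (fun j _ => (sval τ j).natAbs)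
      · intro j hj
        rw [hT, mem_filter] at hj
        have := sval_natAbs_mem τ hj.1
        beta_reduce
        rw [mem_Icc] at this ⊢
        have := hj.2
        omega
      · intro a ha b hb h
        rw [hT, mem_filter] at ha hb
        exact sval_natAbs_inj τ ha.1 hb.1 h
      · intro b hb
        rw [mem_Icc] at hb
        have hbn : b ∈ Finset.Icc 1 n := by rw [mem_Icc]; omega
        rw [← sval_image τ] at hbn
        obtain ⟨j, hj, hjb⟩ := mem_image.1 hbn
        exact ⟨j, by rw [hT, mem_filter]; exact ⟨hj, by omega⟩, hjb⟩
    have hTgt : ∀ j ∈ T, i < j := by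
      intro j hj
      rw [hT, mem_filter, mem_Icc] at hj
      obtain ⟨⟨hj1, hjn⟩, hjm⟩ := hj
      rcases Nat.lt_trichotomy i j with h | h | h
      · exact h
      · exfalso; subst h; omega
      · exfalso
        have := asc_lt τ hτasc j i hj1 h (by omega)
        omega
    have hdc : ∀ j ∈ T, ∀ j' : ℕ, i < j' → j' < j → j' ∈ T := by
      intro j hj j' h1 h2
      rw [hT, mem_filter, mem_Icc] at hj ⊢
      obtain ⟨⟨hj1, hjn⟩, hjm⟩ := hj
      have hlt1 := asc_lt τ hτasc i j' (by omega) h1 (by omega)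
      have hlt2 := asc_lt τ hτasc j' j (by omega) h2 (by omega)
      constructor
      · omega
      · omega
    have hsub : Finset.Icc (i+1) (i+m-1) ⊆ T := by
      intro t ht
      rw [mem_Icc] at ht
      by_contra hc
      have hTsub : T ⊆ Finset.Ioo i t := by
        intro j hj
        rw [mem_Ioo]
        refine ⟨hTgt j hj, ?_⟩
        rcases Nat.lt_trichotomy j t with h | h | h
        · exact h
        · exact absurd (h ▸ hj) hc
        · exact absurd (hdc j hj t (by omega) h) hc
      have := card_le_card hTsub
      rw [Nat.card_Ioo] at this
      omega
    have hTeq : T = Finset.Icc (i+1) (i+m-1) := by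
      apply (eq_of_subset_of_card_le hsub ?_).symm
      rw [hTcard, Nat.card_Icc]
      omega
    have hfeq : (Finset.Icc 1 n).filter
        (fun j => i < j ∧ (sval τ i + sval τ j < 0 ∧ ¬ i % 2 = j % 2))
        = T.filter (fun j => ¬ j % 2 = i % 2) := by
      rw [hT, filter_filter]
      apply filter_congr
      intro j hj
      rw [mem_Icc] at hj
      have hmi : sval τ i = -(m:ℤ) := by omega
      constructor
      · rintro ⟨hij, hsum, hpar⟩
        have := asc_lt τ hτasc i j (by omega) hij (by omega)
        exact ⟨by omega, by omega⟩
      · rintro ⟨hjm, hpar⟩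
        have hij : i < j := hTgt j (by rw [hT, mem_filter, mem_Icc]; exact ⟨⟨hj.1, hj.2⟩, hjm⟩)
        exact ⟨hij, by omega, by omega⟩
    rw [hfeq, hTeq, countB2]

/-- Count of odd negative pairs for a chessboard element. -/
lemma onsp_chess {n : ℕ} (σ : SP n)
    (hpar : ∀ i ∈ Finset.Icc 1 n, ∀ j ∈ Finset.Icc 1 n,
      (i % 2 = j % 2 ↔ sval σ i % 2 = sval σ j % 2)) :
    onspSP σ = ∑ i ∈ (Finset.Icc 1 n).filter (fun i => sval σ i < 0),
      (sval σ i).natAbs / 2 := by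
  have step1 : onspSP σ = ((pairs n).filter
      (fun p => (sval σ p.1 + sval σ p.2 < 0 ∧ ¬ sval σ p.1 % 2 = sval σ p.2 % 2))).card := by
    unfold onspSP
    congr 1
    apply filter_congr
    intro p hp
    obtain ⟨h1, h2, _⟩ := mem_pairs.1 hp
    have := hpar p.1 h1 p.2 h2
    constructor
    · rintro ⟨hs, hp2⟩; exact ⟨hs, fun h => hp2 (this.2 h)⟩
    · rintro ⟨hs, hp2⟩; exact ⟨hs, fun h => hp2 (this.1 h)⟩
  rw [step1]
  rw [swapCard (fun i => sval σ i) (fun i hi j hj h => sval_natAbs_inj σ hi hj h)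
    (fun i j => sval σ i + sval σ j < 0 ∧ ¬ sval σ i % 2 = sval σ j % 2)
    (by intro i j h; constructor; omega; omega)]
  rw [prodCard n (fun i j => (sval σ i + sval σ j < 0 ∧ ¬ sval σ i % 2 = sval σ j % 2)
      ∧ (sval σ j).natAbs < (sval σ i).natAbs)]
  rw [sum_filter]
  apply sum_congr rfl
  intro i hi
  rcases lt_or_ge (sval σ i) 0 with hneg | hpos
  swap
  · rw [if_neg (by omega)]
    rw [card_eq_zero, filter_eq_empty_iff]
    intro j hj hcon
    obtain ⟨⟨hsum, _⟩, habs⟩ := hcon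
    omega
  · rw [if_pos hneg]
    set m := (sval σ i).natAbs with hm
    have hmIcc := sval_natAbs_mem σ hi
    rw [← hm, mem_Icc] at hmIcc
    have hmi : sval σ i = -(m:ℤ) := by omega
    have hfeq : (Finset.Icc 1 n).filter
        (fun j => (sval σ i + sval σ j < 0 ∧ ¬ sval σ i % 2 = sval σ j % 2)
          ∧ (sval σ j).natAbs < (sval σ i).natAbs)
        = (Finset.Icc 1 n).filter
          (fun j => (sval σ j).natAbs < m ∧ ¬ (sval σ j).natAbs % 2 = m % 2) := by
      apply filter_congr
      intro j hj
      rw [hmi]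
      constructor
      · rintro ⟨⟨hsum, hp⟩, habs⟩
        refine ⟨by omega, by omega⟩
      · rintro ⟨habs, hp⟩
        refine ⟨⟨by omega, by omega⟩, by omega⟩
    rw [hfeq, ← countB m]
    apply card_bij (fun j _ => (sval σ j).natAbs)
    · intro j hj
      rw [mem_filter] at hj
      have := sval_natAbs_mem σ hj.1
      beta_reduce
      rw [mem_filter, mem_Icc]
      rw [mem_Icc] at this
      obtain ⟨_, h2, h3⟩ := hj
      exact ⟨⟨by omega, by omega⟩, by omega⟩
    · intro a ha b hb h
      rw [mem_filter] at ha hb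
      exact sval_natAbs_inj σ ha.1 hb.1 h
    · intro b hb
      rw [mem_filter, mem_Icc] at hb
      have hbn : b ∈ Finset.Icc 1 n := by rw [mem_Icc]; omega
      rw [← sval_image σ] at hbn
      obtain ⟨j, hj, hjb⟩ := mem_image.1 hbn
      refine ⟨j, ?_, hjb⟩
      rw [mem_filter]
      exact ⟨hj, by omega, by omega⟩

/-- Lemma 4.5: for a chessboard element `σ` of `D_n`, the odd length is additive with
respect to the parabolic factorization `σ = σ^{[n-1]} σ_{[n-1]}`, where `τ = σ^{[n-1]}`
is ascending and `π = σ_{[n-1]}` is an ordinary permutation of `[n]`. -/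
theorem stmt7 {n : ℕ} (σ τ π : SP n)
    (hσeven : IsEvenSP σ) (hchess : Chessboard σ)
    (hτeven : IsEvenSP τ) (hτasc : Ascending τ)
    (hπpos : ∀ i ∈ Finset.Icc 1 n, 0 < sval π i)
    (hfac : ∀ i ∈ Finset.Icc 1 n, sval σ i = sval τ (sval π i).toNat) :
    LD σ = LD τ + oinvSP π := by
  have hkey : ∀ a b : ℕ, a ∈ Finset.Icc 1 n → b ∈ Finset.Icc 1 n → a < b →
      sval τ a < sval τ b := by
    intro a b ha hb h
    rw [mem_Icc] at ha hb
    exact asc_lt τ hτasc a b (by omega) h (by omega)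
  -- parity from the chessboard condition
  have hparity : ∀ i ∈ Finset.Icc 1 n, ∀ j ∈ Finset.Icc 1 n,
      (i % 2 = j % 2 ↔ sval σ i % 2 = sval σ j % 2) := by
    have key : ∀ i, 1 ≤ i → i ≤ n → ((sval σ i % 2 = sval σ 1 % 2) ↔ i % 2 = 1) := by
      intro i
      induction i with
      | zero => omega
      | succ i ih =>
        intro h1 h2
        rcases Nat.eq_zero_or_pos i with rfl | hi
        · simp
        · have hc := hchess i (by rw [mem_Icc]; omega)
          have ihh := ih (by omega) (by omega)
          omega
    intro i hi j hj
    rw [mem_Icc] at hi hj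
    have k1 := key i hi.1 hi.2
    have k2 := key j hj.1 hj.2
    omega
  -- facts about the permutation π
  have hqmem : ∀ i ∈ Finset.Icc 1 n, (sval π i).toNat ∈ Finset.Icc 1 n := by
    intro i hi
    have h1 := sval_natAbs_mem π hi
    have h2 := hπpos i hi
    rw [mem_Icc] at h1 ⊢
    omega
  have hqinj : ∀ i ∈ Finset.Icc 1 n, ∀ j ∈ Finset.Icc 1 n,
      (sval π i).toNat = (sval π j).toNat → i = j := by
    intro i hi j hj h
    have h1 := hπpos i hi
    have h2 := hπpos j hj
    exact sval_natAbs_inj π hi hj (by omega)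
  have hqimage : (Finset.Icc 1 n).image (fun i => (sval π i).toNat) = Finset.Icc 1 n := by
    apply eq_of_subset_of_card_le
    · intro m hmm2
      obtain ⟨i, hi, rfl⟩ := mem_image.1 hmm2
      exact hqmem i hi
    · rw [card_image_of_injOn (fun i hi j hj h => hqinj i hi j hj h)]
  -- oinv σ = oinv π
  have hoinv : oinvSP σ = oinvSP π := by
    unfold oinvSP
    congr 1
    apply filter_congr
    intro p hp
    obtain ⟨h1, h2, hlt⟩ := mem_pairs.1 hp
    have hf1 := hfac p.1 h1
    have hf2 := hfac p.2 h2
    have hp1 := hπpos p.1 h1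
    have hp2 := hπpos p.2 h2
    have hne : ¬ (sval π p.1).toNat = (sval π p.2).toNat :=
      fun h => by have := hqinj p.1 h1 p.2 h2 h; omega
    have hq1 := hqmem p.1 h1
    have hq2 := hqmem p.2 h2
    constructor
    · rintro ⟨hs, hpar2⟩
      refine ⟨?_, hpar2⟩
      rw [hf1, hf2] at hs
      rcases Nat.lt_trichotomy (sval π p.1).toNat (sval π p.2).toNat with hh | hh | hh
      · have := hkey _ _ hq1 hq2 hh; omega
      · omega
      · omega
    · rintro ⟨hs, hpar2⟩
      refine ⟨?_, hpar2⟩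
      rw [hf1, hf2]
      have hh : (sval π p.2).toNat < (sval π p.1).toNat := by omega
      exact hkey _ _ hq2 hq1 hh
  -- oinv τ = 0
  have hoinvτ : oinvSP τ = 0 := by
    unfold oinvSP
    rw [card_eq_zero, filter_eq_empty_iff]
    intro p hp
    obtain ⟨h1, h2, hlt⟩ := mem_pairs.1 hp
    have := hkey p.1 p.2 h1 h2 hlt
    intro hcon
    omega
  -- onsp σ = onsp τ
  have honsp : onspSP σ = onspSP τ := by
    rw [onsp_chess σ hparity, onsp_asc τ hτasc]
    apply sum_bij (fun i _ => (sval π i).toNat)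
    · intro i hi
      rw [mem_filter] at hi ⊢
      exact ⟨hqmem i hi.1, by rw [← hfac i hi.1]; exact hi.2⟩
    · intro a ha b hb h
      rw [mem_filter] at ha hb
      exact hqinj a ha.1 b hb.1 h
    · intro s hs
      rw [mem_filter] at hs
      have : s ∈ (Finset.Icc 1 n).image (fun i => (sval π i).toNat) := by
        rw [hqimage]; exact hs.1
      obtain ⟨i, hi, hqi⟩ := mem_image.1 this
      refine ⟨i, ?_, hqi⟩
      rw [mem_filter]
      exact ⟨hi, by rw [hfac i hi, hqi]; exact hs.2⟩
    · intro i hi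
      rw [mem_filter] at hi
      rw [hfac i hi.1]
  -- conclusion
  have e1 : LD σ = oinvSP σ + onspSP σ := rfl
  have e2 : LD τ = oinvSP τ + onspSP τ := rfl
  omega

end OddLength
end
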